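/- For every positive even integer k and constant C ≠ 0, the function F(z) = z^{-k/2} + 6^k(-3z - 2√13 + 5)^{-k/2}((5+2√13)z - 3)^{-k/2} + 6^k(3z - 2√13 + 5)^{-k/2}((5+2√13)z + 3)^{-k/2} on the upper half-plane is not identically zero; in fact F(z) is unbounded as z → 0 along the upper half-plane. -/
import Mathlib


open Complex Filter

/-- The function `F(z) = z^{-k/2} + 6^k(-3z - 2√13 + 5)^{-k/2}((5+2√13)z - 3)^{-k/2}
+ 6^k(3z - 2√13 + 5)^{-k/2}((5+2√13)z + 3)^{-k/2}` (principal-branch powers). -/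
noncomputable def F (k : ℕ) (z : ℂ) : ℂ :=
  z ^ (-(k : ℂ) / 2)
    + 6 ^ k * (-3 * z - 2 * (Real.sqrt 13 : ℂ) + 5) ^ (-(k : ℂ) / 2)
        * ((5 + 2 * (Real.sqrt 13 : ℂ)) * z - 3) ^ (-(k : ℂ) / 2)
    + 6 ^ k * (3 * z - 2 * (Real.sqrt 13 : ℂ) + 5) ^ (-(k : ℂ) / 2)
        * ((5 + 2 * (Real.sqrt 13 : ℂ)) * z + 3) ^ (-(k : ℂ) / 2)

lemma sqrt13_bounds : 3.6 ≤ Real.sqrt 13 ∧ Real.sqrt 13 ≤ 3.7 := by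
  constructor
  · rw [show (3.6 : ℝ) = Real.sqrt (3.6 ^ 2) by rw [Real.sqrt_sq]; norm_num]
    exact Real.sqrt_le_sqrt (by norm_num)
  · rw [show (3.7 : ℝ) = Real.sqrt (3.7 ^ 2) by rw [Real.sqrt_sq]; norm_num]
    exact Real.sqrt_le_sqrt (by norm_num)

lemma norm_zpow_neg_le_one {w : ℂ} (m : ℕ) (hw : 1 ≤ ‖w‖) : ‖w ^ (-(m : ℤ))‖ ≤ 1 := by
  rw [norm_zpow]
  exact zpow_le_one_of_nonpos₀ hw (by simp)

/-- For every positive even integer `k` and constant `C ≠ 0`, the function `C·F` is not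
identically zero on the upper half-plane; in fact `C·F(z)` is unbounded (the norm tends
to infinity) as `z → 0` along the upper half-plane. -/
theorem CF_not_identically_zero (k : ℕ) (hk : 0 < k) (hke : Even k) (C : ℂ) (hC : C ≠ 0) :
    (∃ z : ℂ, 0 < z.im ∧ C * F k z ≠ 0) ∧
    Tendsto (fun z => ‖C * F k z‖) (nhdsWithin 0 {z : ℂ | 0 < z.im}) atTop := by
  obtain ⟨m, hm⟩ := hke
  have hm1 : 1 ≤ m := by omega
  have hexp : -(k : ℂ) / 2 = ((-(m : ℤ) : ℤ) : ℂ) := by push_cast [hm]; ring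
  have hFz : ∀ z : ℂ, F k z =
      z ^ (-(m : ℤ))
        + 6 ^ k * (-3 * z - 2 * (Real.sqrt 13 : ℂ) + 5) ^ (-(m : ℤ))
            * ((5 + 2 * (Real.sqrt 13 : ℂ)) * z - 3) ^ (-(m : ℤ))
        + 6 ^ k * (3 * z - 2 * (Real.sqrt 13 : ℂ) + 5) ^ (-(m : ℤ))
            * ((5 + 2 * (Real.sqrt 13 : ℂ)) * z + 3) ^ (-(m : ℤ)) := by
    intro z
    simp only [F, hexp, Complex.cpow_intCast]
  have hs13 := sqrt13_bounds
  -- the key lower bound on ‖F k z‖ for small z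
  have key : ∀ z : ℂ, ‖z‖ ≤ 1 / 10 → z ≠ 0 →
      (‖z‖ ^ m)⁻¹ - 2 * 6 ^ k ≤ ‖F k z‖ := by
    intro z hz hz0
    have hb1 : (1 : ℝ) ≤ ‖-3 * z - 2 * (Real.sqrt 13 : ℂ) + 5‖ := by
      have hge : ‖(-2 * (Real.sqrt 13 : ℂ) + 5) - (3 * z)‖ ≥
          ‖(-2 * (Real.sqrt 13 : ℂ) + 5)‖ - ‖(3 : ℂ) * z‖ := norm_sub_norm_le _ _
      have h1 : ‖(-2 * (Real.sqrt 13 : ℂ) + 5)‖ = 2 * Real.sqrt 13 - 5 := by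
        rw [show (-2 * (Real.sqrt 13 : ℂ) + 5) = ((-2 * Real.sqrt 13 + 5 : ℝ) : ℂ) by
          push_cast; ring]
        rw [Complex.norm_real, Real.norm_eq_abs, abs_of_nonpos (by nlinarith [hs13.1])]
        ring
      have h2 : ‖(3 : ℂ) * z‖ ≤ 3 / 10 := by
        rw [norm_mul]
        have h3 : ‖(3 : ℂ)‖ = 3 := by norm_num
        rw [h3]; linarith
      calc (1 : ℝ) ≤ (2 * Real.sqrt 13 - 5) - 3 / 10 := by nlinarith [hs13.1]
        _ ≤ ‖(-2 * (Real.sqrt 13 : ℂ) + 5)‖ - ‖(3 : ℂ) * z‖ := by rw [h1]; linarith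
        _ ≤ ‖(-2 * (Real.sqrt 13 : ℂ) + 5) - (3 : ℂ) * z‖ := hge
        _ = ‖-3 * z - 2 * (Real.sqrt 13 : ℂ) + 5‖ := by ring_nf
    have hb3 : (1 : ℝ) ≤ ‖3 * z - 2 * (Real.sqrt 13 : ℂ) + 5‖ := by
      have hge : ‖(-2 * (Real.sqrt 13 : ℂ) + 5) - ((-3) * z)‖ ≥
          ‖(-2 * (Real.sqrt 13 : ℂ) + 5)‖ - ‖(-3 : ℂ) * z‖ := norm_sub_norm_le _ _
      have h1 : ‖(-2 * (Real.sqrt 13 : ℂ) + 5)‖ = 2 * Real.sqrt 13 - 5 := by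
        rw [show (-2 * (Real.sqrt 13 : ℂ) + 5) = ((-2 * Real.sqrt 13 + 5 : ℝ) : ℂ) by
          push_cast; ring]
        rw [Complex.norm_real, Real.norm_eq_abs, abs_of_nonpos (by nlinarith [hs13.1])]
        ring
      have h2 : ‖(-3 : ℂ) * z‖ ≤ 3 / 10 := by
        rw [norm_mul]
        have h3 : ‖(-3 : ℂ)‖ = 3 := by
          rw [show ((-3 : ℂ)) = -(3 : ℂ) by ring, norm_neg]; norm_num
        rw [h3]; linarith
      calc (1 : ℝ) ≤ (2 * Real.sqrt 13 - 5) - 3 / 10 := by nlinarith [hs13.1]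
        _ ≤ ‖(-2 * (Real.sqrt 13 : ℂ) + 5)‖ - ‖(-3 : ℂ) * z‖ := by rw [h1]; linarith
        _ ≤ ‖(-2 * (Real.sqrt 13 : ℂ) + 5) - (-3 : ℂ) * z‖ := hge
        _ = ‖3 * z - 2 * (Real.sqrt 13 : ℂ) + 5‖ := by ring_nf
    have hcnorm : ‖((5 : ℂ) + 2 * (Real.sqrt 13 : ℂ))‖ ≤ 12.4 := by
      rw [show ((5 : ℂ) + 2 * (Real.sqrt 13 : ℂ)) = ((5 + 2 * Real.sqrt 13 : ℝ) : ℂ) by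
        push_cast; ring]
      simp only [Complex.norm_real, Real.norm_eq_abs]
      rw [_root_.abs_of_nonneg (by nlinarith [hs13.1] : (0:ℝ) ≤ 5 + 2 * Real.sqrt 13)]
      linarith [hs13.2]
    have hmulz : ‖((5 : ℂ) + 2 * (Real.sqrt 13 : ℂ)) * z‖ ≤ 1.24 := by
      rw [norm_mul]
      calc ‖((5 : ℂ) + 2 * (Real.sqrt 13 : ℂ))‖ * ‖z‖ ≤ 12.4 * (1/10) := by
            apply mul_le_mul hcnorm hz (norm_nonneg _) (by norm_num)
        _ = 1.24 := by norm_num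
    have hb2 : (1 : ℝ) ≤ ‖(5 + 2 * (Real.sqrt 13 : ℂ)) * z - 3‖ := by
      have h := norm_sub_norm_le ((3 : ℂ)) ((5 + 2 * (Real.sqrt 13 : ℂ)) * z)
      have h3 : ‖(3 : ℂ)‖ = 3 := by norm_num
      have hrev : ‖(3 : ℂ) - (5 + 2 * (Real.sqrt 13 : ℂ)) * z‖
          = ‖(5 + 2 * (Real.sqrt 13 : ℂ)) * z - 3‖ := by rw [norm_sub_rev]
      rw [h3, hrev] at h
      linarith [hmulz]
    have hb4 : (1 : ℝ) ≤ ‖(5 + 2 * (Real.sqrt 13 : ℂ)) * z + 3‖ := by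
      have h := norm_sub_norm_le ((3 : ℂ)) (-((5 + 2 * (Real.sqrt 13 : ℂ)) * z))
      have h3 : ‖(3 : ℂ)‖ = 3 := by norm_num
      have hrev : ‖(3 : ℂ) - -((5 + 2 * (Real.sqrt 13 : ℂ)) * z)‖
          = ‖(5 + 2 * (Real.sqrt 13 : ℂ)) * z + 3‖ := by ring_nf
      rw [norm_neg, h3, hrev] at h
      linarith [hmulz]
    -- term bounds
    have ht2 : ‖(6 : ℂ) ^ k * (-3 * z - 2 * (Real.sqrt 13 : ℂ) + 5) ^ (-(m : ℤ))
        * ((5 + 2 * (Real.sqrt 13 : ℂ)) * z - 3) ^ (-(m : ℤ))‖ ≤ 6 ^ k := by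
      rw [norm_mul, norm_mul, norm_pow]
      have h6 : ‖(6 : ℂ)‖ = 6 := by norm_num
      rw [h6]
      calc (6:ℝ) ^ k * ‖(-3 * z - 2 * (Real.sqrt 13 : ℂ) + 5) ^ (-(m : ℤ))‖
            * ‖((5 + 2 * (Real.sqrt 13 : ℂ)) * z - 3) ^ (-(m : ℤ))‖
          ≤ 6 ^ k * 1 * 1 := by
            apply mul_le_mul _ (norm_zpow_neg_le_one m hb2) (norm_nonneg _) (by positivity)
            apply mul_le_mul le_rfl (norm_zpow_neg_le_one m hb1) (norm_nonneg _) (by positivity)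
        _ = 6 ^ k := by ring
    have ht3 : ‖(6 : ℂ) ^ k * (3 * z - 2 * (Real.sqrt 13 : ℂ) + 5) ^ (-(m : ℤ))
        * ((5 + 2 * (Real.sqrt 13 : ℂ)) * z + 3) ^ (-(m : ℤ))‖ ≤ 6 ^ k := by
      rw [norm_mul, norm_mul, norm_pow]
      have h6 : ‖(6 : ℂ)‖ = 6 := by norm_num
      rw [h6]
      calc (6:ℝ) ^ k * ‖(3 * z - 2 * (Real.sqrt 13 : ℂ) + 5) ^ (-(m : ℤ))‖
            * ‖((5 + 2 * (Real.sqrt 13 : ℂ)) * z + 3) ^ (-(m : ℤ))‖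
          ≤ 6 ^ k * 1 * 1 := by
            apply mul_le_mul _ (norm_zpow_neg_le_one m hb4) (norm_nonneg _) (by positivity)
            apply mul_le_mul le_rfl (norm_zpow_neg_le_one m hb3) (norm_nonneg _) (by positivity)
        _ = 6 ^ k := by ring
    have h1 : ‖z ^ (-(m : ℤ))‖ = (‖z‖ ^ m)⁻¹ := by
      rw [norm_zpow, zpow_neg, zpow_natCast]
    rw [hFz z]
    set B := (6 : ℂ) ^ k * (-3 * z - 2 * (Real.sqrt 13 : ℂ) + 5) ^ (-(m : ℤ))
        * ((5 + 2 * (Real.sqrt 13 : ℂ)) * z - 3) ^ (-(m : ℤ)) with hB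
    set D := (6 : ℂ) ^ k * (3 * z - 2 * (Real.sqrt 13 : ℂ) + 5) ^ (-(m : ℤ))
        * ((5 + 2 * (Real.sqrt 13 : ℂ)) * z + 3) ^ (-(m : ℤ)) with hD
    have hfirst : ‖z ^ (-(m : ℤ))‖ ≤ ‖z ^ (-(m : ℤ)) + B + D‖ + ‖B‖ + ‖D‖ := by
      have e : z ^ (-(m : ℤ)) = (z ^ (-(m : ℤ)) + B + D) - B - D := by ring
      calc ‖z ^ (-(m : ℤ))‖ = ‖(z ^ (-(m : ℤ)) + B + D) - B - D‖ := by rw [← e]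
        _ ≤ ‖(z ^ (-(m : ℤ)) + B + D) - B‖ + ‖D‖ := norm_sub_le _ _
        _ ≤ ‖z ^ (-(m : ℤ)) + B + D‖ + ‖B‖ + ‖D‖ := by
            linarith [norm_sub_le (z ^ (-(m : ℤ)) + B + D) B]
    rw [h1] at hfirst
    linarith [ht2, ht3, hfirst]
  -- tendsto part
  have hCpos : 0 < ‖C‖ := norm_pos_iff.mpr hC
  have hlow : Tendsto (fun z : ℂ => ‖C‖ * ((‖z‖ ^ m)⁻¹ - 2 * 6 ^ k))
      (nhdsWithin 0 {z : ℂ | 0 < z.im}) atTop := by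
    apply Tendsto.const_mul_atTop hCpos
    apply tendsto_atTop_add_const_right
    apply tendsto_inv_nhdsGT_zero.comp
    rw [tendsto_nhdsWithin_iff]
    constructor
    · have h0 : Tendsto (fun z : ℂ => ‖z‖ ^ m) (nhds 0) (nhds 0) := by
        have hn : Tendsto (fun z : ℂ => ‖z‖) (nhds 0) (nhds 0) := by
          simpa using continuous_norm.tendsto (0 : ℂ)
        simpa [zero_pow (by omega : m ≠ 0)] using hn.pow m
      exact h0.mono_left nhdsWithin_le_nhds
    · filter_upwards [self_mem_nhdsWithin] with z hz
      have hz0 : z ≠ 0 := by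
        intro h; rw [h] at hz; simp at hz
      have hpos : (0 : ℝ) < ‖z‖ := norm_pos_iff.mpr hz0
      exact Set.mem_Ioi.mpr (by positivity)
  have htend : Tendsto (fun z => ‖C * F k z‖) (nhdsWithin 0 {z : ℂ | 0 < z.im}) atTop := by
    apply tendsto_atTop_mono' _ _ hlow
    have hev : ∀ᶠ z : ℂ in nhdsWithin 0 {z : ℂ | 0 < z.im}, ‖z‖ ≤ 1 / 10 := by
      apply nhdsWithin_le_nhds
      have hn : Tendsto (fun z : ℂ => ‖z‖) (nhds 0) (nhds 0) := by
        simpa using continuous_norm.tendsto (0 : ℂ)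
      exact hn.eventually_le_const (by norm_num)
    filter_upwards [hev, self_mem_nhdsWithin] with z hz hzS
    have hz0 : z ≠ 0 := by
      intro h; rw [h] at hzS; simp at hzS
    have hkey := key z hz hz0
    rw [norm_mul]
    exact mul_le_mul_of_nonneg_left hkey (norm_nonneg _)
  refine ⟨?_, htend⟩
  -- existence part
  have hne : (nhdsWithin (0 : ℂ) {z : ℂ | 0 < z.im}).NeBot := by
    rw [← mem_closure_iff_nhdsWithin_neBot]
    have hseq : Tendsto (fun n : ℕ => Complex.I * ((n : ℂ) + 1)⁻¹) atTop (nhds 0) := by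
      have h1 : Tendsto (fun n : ℕ => ((1 / (n + 1) : ℝ) : ℂ)) atTop (nhds ((0 : ℝ) : ℂ)) :=
        (Complex.continuous_ofReal.tendsto _).comp tendsto_one_div_add_atTop_nhds_zero_nat
      have h2 : Tendsto (fun n : ℕ => (((n : ℂ)) + 1)⁻¹) atTop (nhds 0) := by
        have he : (fun n : ℕ => (((n : ℂ)) + 1)⁻¹) = fun n : ℕ => ((1 / (n + 1) : ℝ) : ℂ) := by
          funext n; push_cast; rw [one_div]
        rw [he]
        simpa using h1
      simpa using h2.const_mul Complex.I
    refine mem_closure_of_tendsto hseq ?_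
    filter_upwards with n
    show (0:ℝ) < (Complex.I * ((n : ℂ) + 1)⁻¹).im
    have h1 : (0:ℝ) < ((n : ℝ) + 1)⁻¹ := by positivity
    have h2 : (((n : ℂ) + 1)⁻¹) = ((((n : ℝ) + 1)⁻¹ : ℝ) : ℂ) := by push_cast; ring
    rw [h2]
    simp only [Complex.mul_im, Complex.I_re, Complex.I_im, Complex.ofReal_re,
      Complex.ofReal_im, one_mul, zero_mul, add_zero]
    simpa using h1
  have hev1 : ∀ᶠ z : ℂ in nhdsWithin 0 {z : ℂ | 0 < z.im},
      1 ≤ ‖C * F k z‖ := htend.eventually_ge_atTop 1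
  obtain ⟨z, hz1, hz2⟩ := (hev1.and self_mem_nhdsWithin).exists
  refine ⟨z, hz2, fun h => ?_⟩
  rw [h, norm_zero] at hz1
  norm_num at hz1
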